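/- (Diffusion amplification for bounded PDP.) Let F(D, ⊥, {p_i}) be the diffusion operator on datasets of size n, which independently keeps each element x_i with probability p_i and replaces it with the placeholder ⊥ with probability 1−p_i. If a mechanism M satisfies ε-DP under the change-one neighboring relation, then the composite mechanism M∘F satisfies (ε₁,…,ε_n)-PDP under the change-one relation, where e^{ε_i} = 1 + p_i(e^ε − 1), i.e., for datasets D, D' differing only in the i-th coordinate and all measurable K, Pr(M(F(D)) ∈ K) ≤ (1 + p_i(e^ε − 1)) · Pr(M(F(D')) ∈ K). -/

import Mathlib

/-!
Split the diffused dataset into its `i`-th coordinate and the rest. The rest has the same law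
for `D` and `D'`, so both output probabilities are mixtures `c * G (D i) + c' * G ⊥` and
`c * G (D' i) + c' * G ⊥` of the same function `G`, with `c = p i`, `c' = 1 - p i`, and `G x` the
probability of `K` when the `i`-th coordinate is set to `x`. Differential privacy gives
`G x ≤ e^ε * G y` for all `x, y`. Bounding `G (D i)` by `e^ε` times `min (G (D' i)) (G ⊥)`, which
is at most the second mixture, yields the factor `1 + p i * (e^ε - 1)`.
-/

open MeasureTheory
open scoped ENNReal

namespace ENNReal

theorem mul_add_mul_le_one_add_mul_tsub_one_mul {c c' E a a' b : ℝ≥0∞} (hcc' : 1 ≤ c + c')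
    (ha' : a ≤ E * a') (hb : a ≤ E * b) :
    c * a + c' * b ≤ (1 + c * (E - 1)) * (c * a' + c' * b) := by
  set m := min a' b
  have ham : a ≤ E * m := by rw [mul_min]; exact le_min ha' hb
  have hEm : E * m ≤ m + (E - 1) * m := by
    calc E * m ≤ (1 + (E - 1)) * m := by gcongr; exact le_add_tsub
      _ = m + (E - 1) * m := by ring
  have hm : m ≤ c * a' + c' * b :=
    calc m ≤ (c + c') * m := le_mul_of_one_le_left' hcc'
      _ = c * m + c' * m := add_mul _ _ _
      _ ≤ c * a' + c' * b := by gcongr; exacts [min_le_left _ _, min_le_right _ _]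
  calc c * a + c' * b ≤ c * (m + (E - 1) * m) + c' * b := by gcongr; exact ham.trans hEm
    _ = c * m + c' * b + c * (E - 1) * m := by ring
    _ ≤ c * a' + c' * b + c * (E - 1) * (c * a' + c' * b) := by
        gcongr; exact min_le_left _ _
    _ = (1 + c * (E - 1)) * (c * a' + c' * b) := by ring

theorem ofReal_one_add_mul_sub_one {p x : ℝ} (hp : 0 ≤ p) (hx : 1 ≤ x) :
    ENNReal.ofReal (1 + p * (x - 1)) = 1 + ENNReal.ofReal p * (ENNReal.ofReal x - 1) := by
  rw [ENNReal.ofReal_add zero_le_one (mul_nonneg hp (sub_nonneg.2 hx)), ENNReal.ofReal_one,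
    ENNReal.ofReal_mul hp, ENNReal.ofReal_sub _ zero_le_one, ENNReal.ofReal_one]

end ENNReal

theorem Fin.insertNth_apply_of_ne {n : ℕ} {α : Fin (n + 1) → Type*} {i j : Fin (n + 1)}
    (hj : j ≠ i) (x x' : α i) (y : ∀ k, α (i.succAbove k)) :
    i.insertNth x y j = i.insertNth x' y j := by
  obtain ⟨k, rfl⟩ := Fin.exists_succAbove_eq hj
  simp only [Fin.insertNth_apply_succAbove]

namespace MeasureTheory

instance isFiniteMeasure_ofReal_smul {β : Type*} [MeasurableSpace β] (r : ℝ) (μ : Measure β)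
    [IsFiniteMeasure μ] : IsFiniteMeasure (ENNReal.ofReal r • μ) :=
  μ.smul_finite ENNReal.ofReal_ne_top

variable {n : ℕ} {α : Fin (n + 1) → Type*} [∀ j, MeasurableSpace (α j)]
  (μ : ∀ j, Measure (α j)) [∀ j, SigmaFinite (μ j)] (i : Fin (n + 1))

theorem lintegral_pi_eq_lintegral_lintegral_insertNth {f : (∀ j, α j) → ℝ≥0∞}
    (hf : Measurable f) :
    ∫⁻ x, f x ∂Measure.pi μ =
      ∫⁻ xᵢ, ∫⁻ y, f (i.insertNth xᵢ y) ∂Measure.pi (fun j ↦ μ (i.succAbove j)) ∂μ i := by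
  rw [← (measurePreserving_piFinSuccAbove μ i).symm.lintegral_comp_emb
    (MeasurableEquiv.measurableEmbedding _), lintegral_prod]
  · rfl
  · exact (hf.comp (MeasurableEquiv.piFinSuccAbove α i).symm.measurable).aemeasurable

theorem lintegral_pi_of_apply_eq_smul_dirac_add_smul_dirac {c c' : ℝ≥0∞} {a b : α i}
    (hμi : μ i = c • Measure.dirac a + c' • Measure.dirac b) {f : (∀ j, α j) → ℝ≥0∞}
    (hf : Measurable f) :
    ∫⁻ x, f x ∂Measure.pi μ =
      c * ∫⁻ y, f (i.insertNth a y) ∂Measure.pi (fun j ↦ μ (i.succAbove j)) +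
        c' * ∫⁻ y, f (i.insertNth b y) ∂Measure.pi (fun j ↦ μ (i.succAbove j)) := by
  have hg : Measurable fun xᵢ ↦
      ∫⁻ y, f (i.insertNth xᵢ y) ∂Measure.pi (fun j ↦ μ (i.succAbove j)) :=
    (hf.comp (MeasurableEquiv.piFinSuccAbove α i).symm.measurable).lintegral_prod_right'
  rw [lintegral_pi_eq_lintegral_lintegral_insertNth μ i hf, hμi, lintegral_add_measure,
    lintegral_smul_measure, lintegral_smul_measure, lintegral_dirac' _ hg,
    lintegral_dirac' _ hg, smul_eq_mul, smul_eq_mul]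

end MeasureTheory

theorem diffusion_amplification_general {X 𝒴 : Type*} [MeasurableSpace X] [MeasurableSpace 𝒴]
    {n : ℕ} (bot : X) (p : Fin n → ℝ) (hp0 : ∀ i, 0 ≤ p i)
    (ε : ℝ) (hε : 0 ≤ ε)
    (M : (Fin n → X) → Measure 𝒴) (hMmeas : Measurable M)
    (hDP : ∀ A A' : Fin n → X, (∃ i₀, ∀ j, j ≠ i₀ → A j = A' j) →
      ∀ K : Set 𝒴, MeasurableSet K → M A K ≤ ENNReal.ofReal (Real.exp ε) * M A' K)
    (F : (Fin n → X) → Measure (Fin n → X))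
    (hF : ∀ D : Fin n → X, F D = Measure.pi fun i =>
      ENNReal.ofReal (p i) • Measure.dirac (D i) +
        ENNReal.ofReal (1 - p i) • Measure.dirac bot)
    (i : Fin n) (D D' : Fin n → X) (hDD' : ∀ j, j ≠ i → D j = D' j)
    (K : Set 𝒴) (hK : MeasurableSet K) :
    ((F D).bind M) K ≤
      ENNReal.ofReal (1 + p i * (Real.exp ε - 1)) * ((F D').bind M) K := by
  obtain ⟨n, rfl⟩ := Nat.exists_eq_add_one_of_ne_zero i.pos.ne'
  let diffuse (A : Fin (n + 1) → X) (j : Fin (n + 1)) : Measure X :=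
    ENNReal.ofReal (p j) • Measure.dirac (A j) + ENNReal.ofReal (1 - p j) • Measure.dirac bot
  have hrest : (fun j ↦ diffuse D' (i.succAbove j)) = fun j ↦ diffuse D (i.succAbove j) := by
    funext j; simp only [diffuse, hDD' _ (Fin.succAbove_ne i j)]
  have hMK : Measurable fun A ↦ M A K := (Measure.measurable_coe hK).comp hMmeas
  let G (x : X) : ℝ≥0∞ :=
    ∫⁻ y, M (i.insertNth x y) K ∂Measure.pi (fun j ↦ diffuse D (i.succAbove j))
  have hG (x y : X) : G x ≤ ENNReal.ofReal (Real.exp ε) * G y := by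
    rw [← lintegral_const_mul' _ _ ENNReal.ofReal_ne_top]
    exact lintegral_mono fun z ↦
      hDP _ _ ⟨i, fun j hj ↦ Fin.insertNth_apply_of_ne (α := fun _ ↦ X) hj x y z⟩ K hK
  have hcc' : 1 ≤ ENNReal.ofReal (p i) + ENNReal.ofReal (1 - p i) := by
    simpa using ENNReal.ofReal_add_le (p := p i) (q := 1 - p i)
  rw [Measure.bind_apply hK hMmeas.aemeasurable, Measure.bind_apply hK hMmeas.aemeasurable,
    hF, hF, lintegral_pi_of_apply_eq_smul_dirac_add_smul_dirac _ i rfl hMK,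
    lintegral_pi_of_apply_eq_smul_dirac_add_smul_dirac _ i rfl hMK, hrest,
    ENNReal.ofReal_one_add_mul_sub_one (hp0 i) (Real.one_le_exp hε)]
  exact ENNReal.mul_add_mul_le_one_add_mul_tsub_one_mul hcc' (hG _ _) (hG _ _)

/-- Diffusion amplification for bounded PDP: if `M` is `ε`-DP under the change-one
relation, and `F` is the diffusion that independently keeps `D i` with probability
`p i` and otherwise replaces it with the placeholder `bot`, then for datasets `D, D'`
differing only in coordinate `i`, the composite `M ∘ F` satisfies
`Pr(M(F(D)) ∈ K) ≤ (1 + p_i(e^ε − 1)) · Pr(M(F(D')) ∈ K)`. -/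
theorem diffusion_amplification {X 𝒴 : Type*} [MeasurableSpace X] [MeasurableSpace 𝒴]
    {n : ℕ} (bot : X) (p : Fin n → ℝ) (hp0 : ∀ i, 0 ≤ p i) (hp1 : ∀ i, p i ≤ 1)
    (ε : ℝ) (hε : 0 ≤ ε)
    (M : (Fin n → X) → Measure 𝒴) (hMmeas : Measurable M)
    (hMprob : ∀ A, IsProbabilityMeasure (M A))
    (hDP : ∀ A A' : Fin n → X, (∃ i₀, ∀ j, j ≠ i₀ → A j = A' j) →
      ∀ K : Set 𝒴, MeasurableSet K → M A K ≤ ENNReal.ofReal (Real.exp ε) * M A' K)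
    (F : (Fin n → X) → Measure (Fin n → X))
    (hF : ∀ D : Fin n → X, F D = Measure.pi fun i =>
      ENNReal.ofReal (p i) • Measure.dirac (D i) +
        ENNReal.ofReal (1 - p i) • Measure.dirac bot)
    (i : Fin n) (D D' : Fin n → X) (hDD' : ∀ j, j ≠ i → D j = D' j)
    (K : Set 𝒴) (hK : MeasurableSet K) :
    ((F D).bind M) K ≤
      ENNReal.ofReal (1 + p i * (Real.exp ε - 1)) * ((F D').bind M) K :=
  diffusion_amplification_general bot p hp0 ε hε M hMmeas hDP F hF i D D' hDD' K hK
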